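/- arXiv:2604.03000 — 6 statements merged into one kernel-verified Lean document; each statement's English description precedes it below -/
import Mathlib

section
/- For any prime number p ≥ 5, the central-type binomial coefficient satisfies Wolstenholme's congruence: binomial(2p-1, p-1) ≡ 1 (mod p^3), i.e. p^3 divides binomial(2p-1, p-1) - 1 as integers. -/
/-!
Doubling the central coefficient gives `2 * (choose (2p-1) (p-1) - 1) = ∑_{0<k<p} (choose p k)²`
by Vandermonde's identity. For `0 < k < p` put `a_k = choose p k / p`; `k * a_k = choose (p-1) (k-1)`
is `±1` modulo `p`, so `a_k² ≡ k⁻²`. Hence `∑ a_k² ≡ ∑_{x ∈ 𝔽_p} x⁻² = ∑_{x ∈ 𝔽_p} x² ≡ 0` once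
`2 < p - 1`, and the sum of the `(choose p k)² = p² a_k²` is divisible by `p³`.
-/

open Finset

theorem FiniteField.sum_inv_pow_eq_zero {K : Type*} [Field K] [Fintype K] {i : ℕ}
    (h : i < Fintype.card K - 1) : ∑ x : K, x⁻¹ ^ i = 0 :=
  (Equiv.sum_comp (Equiv.inv K) (· ^ i)).trans (sum_pow_lt_card_sub_one K i h)

theorem ZMod.sum_range_natCast {M : Type*} [AddCommMonoid M] (n : ℕ) [NeZero n]
    (f : ZMod n → M) : ∑ k ∈ range n, f k = ∑ x : ZMod n, f x :=
  sum_nbij' (fun k => (k : ZMod n)) ZMod.val (fun _ _ => mem_univ _)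
    (fun x _ => mem_range.2 x.val_lt) (fun _ hk => ZMod.val_cast_of_lt (mem_range.1 hk))
    (fun x _ => ZMod.natCast_zmod_val x) (fun _ _ => rfl)

namespace Nat

theorem centralBinom_eq_two_mul_choose_sub_one {n : ℕ} (hn : n ≠ 0) :
    centralBinom n = 2 * (2 * n - 1).choose (n - 1) := by
  obtain ⟨m, rfl⟩ := exists_eq_add_one_of_ne_zero hn
  rw [centralBinom_eq_two_mul_choose, show 2 * (m + 1) = 2 * m + 1 + 1 by ring,
    choose_succ_succ', choose_symm_half, add_tsub_cancel_right, add_tsub_cancel_right, ← two_mul]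

theorem sum_Ico_choose_sq_add_two {n : ℕ} (hn : n ≠ 0) :
    ∑ k ∈ Ico 1 n, n.choose k ^ 2 + 2 = centralBinom n := by
  rw [centralBinom_eq_two_mul_choose, ← sum_range_choose_sq, sum_range_succ, range_eq_Ico,
    sum_eq_sum_Ico_succ_bot (pos_of_ne_zero hn)]
  simp only [choose_zero_right, choose_self]
  ring

namespace Prime

variable {p : ℕ} (hp : p.Prime)
include hp

theorem cast_choose_sub_one {j : ℕ} (hj : j < p) : ((p - 1).choose j : ZMod p) = (-1) ^ j := by
  induction j with
  | zero => simp
  | succ j ih =>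
    have hpascal : ((p - 1).choose j : ZMod p) + ((p - 1).choose (j + 1) : ZMod p) = 0 := by
      rw [← cast_add, ← choose_succ_succ', sub_one_add_one hp.ne_zero,
        ZMod.natCast_eq_zero_iff]
      exact hp.dvd_choose_self j.succ_ne_zero hj
    rw [ih (by omega)] at hpascal
    linear_combination hpascal

theorem choose_div_self_mul {k : ℕ} (hk0 : k ≠ 0) (hkp : k < p) :
    p.choose k / p * k = (p - 1).choose (k - 1) := by
  have h := add_one_mul_choose_eq (p - 1) (k - 1)
  rw [sub_one_add_one hp.ne_zero, sub_one_add_one hk0] at h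
  rw [Nat.div_mul_right_comm (hp.dvd_choose_self hk0 hkp), ← h,
    Nat.mul_div_cancel_left _ hp.pos]

theorem cast_choose_div_self_sq {k : ℕ} (hk0 : k ≠ 0) (hkp : k < p) :
    ((p.choose k / p : ℕ) : ZMod p) ^ 2 = (k : ZMod p)⁻¹ ^ 2 := by
  have hmul := congrArg (Nat.cast : ℕ → ZMod p) (hp.choose_div_self_mul hk0 hkp)
  rw [cast_mul, hp.cast_choose_sub_one (by omega)] at hmul
  have : Fact p.Prime := ⟨hp⟩
  rw [inv_pow]
  refine eq_inv_of_mul_eq_one_left ?_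
  rw [← mul_pow, hmul, ← pow_mul, mul_comm, pow_mul, neg_one_sq, one_pow]

theorem dvd_sum_sq_choose_div_self (h3 : 3 < p) :
    p ∣ ∑ k ∈ Ico 1 p, (p.choose k / p) ^ 2 := by
  have : Fact p.Prime := ⟨hp⟩
  rw [← ZMod.natCast_eq_zero_iff]
  push_cast
  rw [sum_congr rfl fun k hk => hp.cast_choose_div_self_sq (by grind) (mem_Ico.1 hk).2]
  -- the missing `k = 0` term is `0⁻¹ ^ 2 = 0`
  have hrange : ∑ k ∈ range p, (k : ZMod p)⁻¹ ^ 2 = ∑ k ∈ Ico 1 p, (k : ZMod p)⁻¹ ^ 2 := by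
    rw [range_eq_Ico, sum_eq_sum_Ico_succ_bot hp.pos]
    simp
  rw [← hrange, ZMod.sum_range_natCast p (fun x => x⁻¹ ^ 2)]
  exact FiniteField.sum_inv_pow_eq_zero (by rw [ZMod.card]; omega)

theorem pow_three_dvd_sum_choose_sq (h3 : 3 < p) : p ^ 3 ∣ ∑ k ∈ Ico 1 p, p.choose k ^ 2 := by
  have hterm : ∀ k ∈ Ico 1 p, p.choose k ^ 2 = p ^ 2 * (p.choose k / p) ^ 2 := fun k hk => by
    rw [← mul_pow, Nat.mul_div_cancel' (hp.dvd_choose_self (by grind) (mem_Ico.1 hk).2)]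
  rw [sum_congr rfl hterm, ← mul_sum, pow_succ]
  exact mul_dvd_mul_left _ (hp.dvd_sum_sq_choose_div_self h3)

end Prime

end Nat

/-- Wolstenholme's theorem: for any prime `p ≥ 5`,
`binomial(2p-1, p-1) ≡ 1 (mod p^3)`. -/
theorem wolstenholme (p : ℕ) (hp : p.Prime) (h5 : 5 ≤ p) :
    (p : ℤ) ^ 3 ∣ ((Nat.choose (2 * p - 1) (p - 1) : ℤ) - 1) := by
  have hsum : (∑ k ∈ Ico 1 p, p.choose k ^ 2 : ℕ) = 2 * ((2 * p - 1).choose (p - 1) - 1 : ℤ) := by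
    have h := Nat.sum_Ico_choose_sq_add_two hp.ne_zero
    rw [Nat.centralBinom_eq_two_mul_choose_sub_one hp.ne_zero] at h
    have hℤ := congrArg (Nat.cast : ℕ → ℤ) h
    push_cast at hℤ ⊢
    linear_combination hℤ
  have hdvd : (p : ℤ) ^ 3 ∣ 2 * ((2 * p - 1).choose (p - 1) - 1 : ℤ) := by
    rw [← hsum]
    exact_mod_cast hp.pow_three_dvd_sum_choose_sq (by omega)
  have hcop : IsCoprime ((p : ℤ) ^ 3) 2 :=
    (Nat.isCoprime_iff_coprime.2 ((Nat.coprime_primes hp Nat.prime_two).2 (by omega))).pow_left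
  exact hcop.dvd_of_dvd_mul_left hdvd
end

section
/- For any prime p ≥ 5, the harmonic number H_{p-1} = ∑_{k=1}^{p-1} 1/k (a rational number) satisfies H_{p-1} ≡ 0 (mod p^2) in the sense that either H_{p-1} = 0 or its p-adic valuation is at least 2: padicValRat p (H_{p-1}) ≥ 2. -/
/-! Pair `k` with `p - k`: in `ZMod (p ^ 2)` one has `k⁻¹ + (p - k)⁻¹ = -p k⁻²`, so
`2 H_{p-1} ≡ -p ∑ k⁻²`, and `p ∑ k⁻²` vanishes mod `p²` because `∑ k⁻²` vanishes mod `p`: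
there the `k⁻¹` run through the nonzero residues and `∑_{x ∈ 𝔽_p} x² = 0` for `p > 3`.
Clearing the denominator `(p - 1)!`, which is prime to `p`, turns this into `p² ∣ N` for the
natural number `N = H_{p-1} (p - 1)!`. -/

open Finset Nat

namespace ZMod

lemma sum_range_natCast_eq_sum_univ {n : ℕ} [NeZero n] {M : Type*} [AddCommMonoid M]
    (f : ZMod n → M) : ∑ k ∈ range n, f k = ∑ x : ZMod n, f x :=
  sum_nbij' (↑) val (by simp) (by simp [val_lt]) (fun k hk => val_cast_of_lt (mem_range.1 hk))
    (fun x _ => natCast_zmod_val x) (fun _ _ => rfl)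

lemma sum_Ico_one_prime_inv_sq_eq_zero {p : ℕ} [Fact p.Prime] (hp3 : 3 < p) :
    ∑ k ∈ Ico 1 p, (k : ZMod p)⁻¹ ^ 2 = 0 := by
  have hsq : ∑ x : ZMod p, x ^ 2 = 0 :=
    FiniteField.sum_pow_lt_card_sub_one _ 2 (by rw [ZMod.card]; omega)
  -- the reindexing adds the term `k = 0`, which is `0⁻¹ ^ 2 = 0`
  rw [← hsq, ← Equiv.sum_comp (Equiv.inv (ZMod p)) (· ^ 2), ← sum_range_natCast_eq_sum_univ,
    range_eq_Ico, sum_eq_sum_Ico_succ_bot (Fact.out : p.Prime).pos]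
  simp

lemma isUnit_natCast_of_mem_Ico {p n k : ℕ} (hp : p.Prime) (hn : 0 < n) (hk : k ∈ Ico 1 p) :
    IsUnit (k : ZMod (p ^ n)) :=
  (isUnit_natCast_iff_not_dvd_pow hp hn).2 <|
    Nat.not_dvd_of_pos_of_lt (mem_Ico.1 hk).1 (mem_Ico.1 hk).2

lemma inv_sub_eq_of_sq_eq_zero {n : ℕ} {a c : ZMod n} (ha : IsUnit a) (hc : c ^ 2 = 0) :
    (c - a)⁻¹ = -a⁻¹ - c * a⁻¹ ^ 2 := by
  apply ZMod.inv_eq_of_mul_eq_one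
  linear_combination (1 + c * a⁻¹) * mul_inv_of_unit a ha - a⁻¹ ^ 2 * hc

lemma castHom_inv_of_isUnit {m n : ℕ} (h : m ∣ n) {x : ZMod n} (hx : IsUnit x) :
    castHom h (ZMod m) x⁻¹ = (castHom h (ZMod m) x)⁻¹ :=
  (ZMod.inv_eq_of_mul_eq_one _ _ _ (by rw [← map_mul, mul_inv_of_unit x hx, map_one])).symm

lemma natCast_mul_eq_zero_of_castHom_eq_zero {p : ℕ} [NeZero p] {x : ZMod (p ^ 2)}
    (hx : castHom (dvd_pow_self p two_ne_zero) (ZMod p) x = 0) : (p : ZMod (p ^ 2)) * x = 0 := by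
  rw [castHom_apply, ← natCast_val, natCast_eq_zero_iff] at hx
  obtain ⟨m, hm⟩ := hx
  rw [← natCast_zmod_val x, hm, Nat.cast_mul, ← mul_assoc, ← sq, ← Nat.cast_pow, natCast_self,
    zero_mul]

theorem sum_Ico_one_prime_inv_mod_sq {p : ℕ} [Fact p.Prime] (hp3 : 3 < p) :
    ∑ k ∈ Ico 1 p, (k : ZMod (p ^ 2))⁻¹ = 0 := by
  have hp : p.Prime := Fact.out
  have hp2 : (p : ZMod (p ^ 2)) ^ 2 = 0 := by rw [← Nat.cast_pow, natCast_self]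
  have hreflect : ∑ k ∈ Ico 1 p, ((p - k : ℕ) : ZMod (p ^ 2))⁻¹ =
      ∑ k ∈ Ico 1 p, (k : ZMod (p ^ 2))⁻¹ := by
    rw [sum_Ico_reflect (fun j => (j : ZMod (p ^ 2))⁻¹) 1 (le_succ p), Nat.add_sub_cancel_left,
      Nat.add_sub_cancel]
  have hpair : ∀ k ∈ Ico 1 p, (k : ZMod (p ^ 2))⁻¹ + ((p - k : ℕ) : ZMod (p ^ 2))⁻¹ =
      -(p * (k : ZMod (p ^ 2))⁻¹ ^ 2) := by
    intro k hk
    rw [Nat.cast_sub (mem_Ico.1 hk).2.le,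
      inv_sub_eq_of_sq_eq_zero (isUnit_natCast_of_mem_Ico hp two_pos hk) hp2]
    ring
  have hmodp : castHom (dvd_pow_self p two_ne_zero) (ZMod p)
      (∑ k ∈ Ico 1 p, (k : ZMod (p ^ 2))⁻¹ ^ 2) = 0 := by
    rw [map_sum, ← sum_Ico_one_prime_inv_sq_eq_zero hp3]
    refine sum_congr rfl fun k hk => ?_
    rw [map_pow, castHom_inv_of_isUnit _ (isUnit_natCast_of_mem_Ico hp two_pos hk), map_natCast]
  have htwo : IsUnit (2 : ZMod (p ^ 2)) := by
    simpa using isUnit_natCast_of_mem_Ico (k := 2) hp two_pos (mem_Ico.2 ⟨one_le_two, by omega⟩)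
  apply htwo.mul_left_cancel
  rw [mul_zero, two_mul]
  nth_rw 2 [← hreflect]
  rw [← sum_add_distrib, sum_congr rfl hpair, sum_neg_distrib, ← mul_sum,
    natCast_mul_eq_zero_of_castHom_eq_zero hmodp, neg_zero]

lemma natCast_sum_div_eq_mul_sum_inv {n m : ℕ} {s : Finset ℕ}
    (h : ∀ k ∈ s, k ∣ m ∧ IsUnit (k : ZMod n)) :
    ((∑ k ∈ s, m / k : ℕ) : ZMod n) = m * ∑ k ∈ s, (k : ZMod n)⁻¹ := by
  rw [Nat.cast_sum, mul_sum]
  refine sum_congr rfl fun k hk => ?_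
  conv_rhs => rw [← Nat.div_mul_cancel (h k hk).1]
  rw [Nat.cast_mul, mul_assoc, mul_inv_of_unit _ (h k hk).2, mul_one]

end ZMod

lemma sum_one_div_mul_eq_natCast_sum_div {m : ℕ} {s : Finset ℕ} (h : ∀ k ∈ s, k ∣ m)
    (h0 : 0 ∉ s) : (∑ k ∈ s, (1 : ℚ) / k) * m = ((∑ k ∈ s, m / k : ℕ) : ℚ) := by
  rw [Nat.cast_sum, sum_mul]
  refine sum_congr rfl fun k hk => ?_
  rw [Nat.cast_div (h k hk) (Nat.cast_ne_zero.2 (ne_of_mem_of_not_mem hk h0)), one_div_mul_eq_div]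

lemma padicValRat_eq_padicValNat_of_mul_eq {p : ℕ} [Fact p.Prime] {q : ℚ} {d N : ℕ}
    (hd : ¬ p ∣ d) (hN : N ≠ 0) (h : q * d = N) : padicValRat p q = padicValNat p N := by
  have hd0 : (d : ℚ) ≠ 0 := Nat.cast_ne_zero.2 (by rintro rfl; exact hd (dvd_zero p))
  have hq0 : q ≠ 0 := by rintro rfl; exact hN (by exact_mod_cast h.symm.trans (zero_mul _))
  rw [← padicValRat.of_nat, ← h, padicValRat.mul hq0 hd0, padicValRat.of_nat,
    padicValNat.eq_zero_of_not_dvd hd, Nat.cast_zero, add_zero]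

/-- For a prime `p ≥ 5`, the harmonic number `H_{p-1} = ∑_{k=1}^{p-1} 1/k`
vanishes modulo `p^2`: it is zero or has `p`-adic valuation at least `2`. -/
theorem harmonic_padicValRat_ge_two (p : ℕ) (hp : p.Prime) (h5 : 5 ≤ p) :
    (∑ k ∈ Finset.Icc 1 (p - 1), (1 : ℚ) / k) = 0 ∨
      2 ≤ padicValRat p (∑ k ∈ Finset.Icc 1 (p - 1), (1 : ℚ) / k) := by
  have : Fact p.Prime := ⟨hp⟩
  right
  rw [Icc_sub_one_right_eq_Ico_of_not_isMin (by simp [hp.ne_zero])]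
  have hdvd : ∀ k ∈ Ico 1 p, k ∣ (p - 1)! := fun k hk =>
    Nat.dvd_factorial (mem_Ico.1 hk).1 (Nat.le_sub_one_of_lt (mem_Ico.1 hk).2)
  set N := ∑ k ∈ Ico 1 p, (p - 1)! / k
  have hN0 : N ≠ 0 :=
    (sum_pos (fun k hk => Nat.div_pos (le_of_dvd (factorial_pos _) (hdvd k hk))
      (mem_Ico.1 hk).1) ⟨1, mem_Ico.2 ⟨le_rfl, hp.one_lt⟩⟩).ne'
  have hN : p ^ 2 ∣ N := by
    rw [← ZMod.natCast_eq_zero_iff, ZMod.natCast_sum_div_eq_mul_sum_inv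
      (fun k hk => ⟨hdvd k hk, ZMod.isUnit_natCast_of_mem_Ico hp two_pos hk⟩),
      ZMod.sum_Ico_one_prime_inv_mod_sq (by omega), mul_zero]
  rw [padicValRat_eq_padicValNat_of_mul_eq (by rw [hp.dvd_factorial]; omega) hN0
    (sum_one_div_mul_eq_natCast_sum_div hdvd (by simp))]
  exact_mod_cast (padicValNat_dvd_iff_le hN0).1 hN
end

section
/- For any prime p ≥ 5, the generalized harmonic number H_{p-1}^{(2)} = ∑_{k=1}^{p-1} 1/k^2 (a rational number) satisfies H_{p-1}^{(2)} ≡ 0 (mod p) in the sense that either H_{p-1}^{(2)} = 0 or its p-adic valuation is at least 1: padicValRat p (H_{p-1}^{(2)}) ≥ 1. -/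
/-!
Put `N = ∑_{k=1}^{p-1} ((p-1)!/k)^m`, so that `H_{p-1}^{(m)} = N / (p-1)!^m` with `p ∤ (p-1)!`.
Modulo `p`, `N ≡ (p-1)!^m ∑_{x ∈ 𝔽_p^×} x^{-m}`, and `x ↦ x⁻¹` permutes `𝔽_p^×`, so the sum is
the power sum `∑_{x ∈ 𝔽_p^×} x^m`, which vanishes unless `p - 1 ∣ m`; and `p - 1 ∤ 2` once `p ≥ 5`.
-/

open Finset Nat

namespace ZMod

variable {p : ℕ} [Fact p.Prime]

theorem natCast_ne_zero_of_mem_Icc {k : ℕ} (hk : k ∈ Icc 1 (p - 1)) : (k : ZMod p) ≠ 0 := by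
  rw [Ne, natCast_eq_zero_iff]
  exact Nat.not_dvd_of_pos_of_lt (by grind) (by grind [(Fact.out : p.Prime).pos])

theorem sum_Icc_natCast_eq_sum_units {M : Type*} [AddCommMonoid M] (f : ZMod p → M) :
    ∑ k ∈ Icc 1 (p - 1), f k = ∑ u : (ZMod p)ˣ, f u :=
  sum_bij' (fun k hk ↦ Units.mk0 (k : ZMod p) (natCast_ne_zero_of_mem_Icc hk))
    (fun u _ ↦ (u : ZMod p).val)
    (fun _ _ ↦ mem_univ _)
    (fun u _ ↦ by grind [u.ne_zero, val_ne_zero, val_lt])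
    (fun k hk ↦ by simp [val_cast_of_lt (show k < p by grind)])
    (fun u _ ↦ Units.ext (natCast_zmod_val _))
    (fun _ _ ↦ rfl)

theorem sum_Icc_inv_pow_eq_zero {m : ℕ} (hm : ¬p - 1 ∣ m) :
    ∑ k ∈ Icc 1 (p - 1), ((k : ZMod p)⁻¹) ^ m = 0 := by
  rw [sum_Icc_natCast_eq_sum_units fun x ↦ x⁻¹ ^ m]
  calc ∑ u : (ZMod p)ˣ, ((u : ZMod p)⁻¹) ^ m
      = ∑ u : (ZMod p)ˣ, ((u⁻¹ : (ZMod p)ˣ) : ZMod p) ^ m := by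
        simp only [Units.val_inv_eq_inv_val]
    _ = ∑ u : (ZMod p)ˣ, (u : ZMod p) ^ m :=
      Equiv.sum_comp (Equiv.inv (ZMod p)ˣ) fun u ↦ (u : ZMod p) ^ m
    _ = 0 := by rw [FiniteField.sum_pow_units, card, if_neg hm]

end ZMod

theorem Nat.cast_sum_factorial_div_pow {K : Type*} [Field K] (n m : ℕ)
    (h : ∀ k ∈ Icc 1 n, (k : K) ≠ 0) :
    ((∑ k ∈ Icc 1 n, (n ! / k) ^ m : ℕ) : K) = (n ! : K) ^ m * ∑ k ∈ Icc 1 n, ((k : K)⁻¹) ^ m := by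
  rw [mul_sum]
  push_cast
  refine sum_congr rfl fun k hk ↦ ?_
  rw [Nat.cast_div (Nat.dvd_factorial (by grind) (by grind)) (h k hk), div_eq_mul_inv, mul_pow]

theorem one_le_padicValRat_div {p a b : ℕ} [Fact p.Prime] (ha : a ≠ 0) (hpa : p ∣ a)
    (hpb : ¬p ∣ b) : 1 ≤ padicValRat p (a / b) := by
  have hb : b ≠ 0 := by rintro rfl; exact hpb (dvd_zero p)
  rw [padicValRat.div (by exact_mod_cast ha) (by exact_mod_cast hb), padicValRat.of_nat,
    padicValRat.of_nat, padicValNat.eq_zero_of_not_dvd hpb, Nat.cast_zero, sub_zero]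
  exact_mod_cast one_le_padicValNat_of_dvd ha hpa

theorem sum_Icc_one_div_pow_eq_zero_or_one_le_padicValRat {p m : ℕ} [hp : Fact p.Prime]
    (hm : ¬p - 1 ∣ m) :
    (∑ k ∈ Icc 1 (p - 1), (1 : ℚ) / (k : ℚ) ^ m) = 0 ∨
      1 ≤ padicValRat p (∑ k ∈ Icc 1 (p - 1), (1 : ℚ) / (k : ℚ) ^ m) := by
  set N := ∑ k ∈ Icc 1 (p - 1), ((p - 1)! / k) ^ m
  have hsum : ∑ k ∈ Icc 1 (p - 1), (1 : ℚ) / (k : ℚ) ^ m = N / ((p - 1)! ^ m : ℕ) := by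
    rw [eq_div_iff (by positivity),
      Nat.cast_sum_factorial_div_pow _ _ fun k hk ↦ Nat.cast_ne_zero.mpr (by grind)]
    simp only [one_div, inv_pow, Nat.cast_pow, mul_comm]
  have hpN : p ∣ N := by
    rw [← ZMod.natCast_eq_zero_iff, Nat.cast_sum_factorial_div_pow _ _
      fun k hk ↦ ZMod.natCast_ne_zero_of_mem_Icc hk, ZMod.sum_Icc_inv_pow_eq_zero hm, mul_zero]
  have hpF : ¬p ∣ (p - 1)! ^ m := fun h ↦ by
    have := (hp.out.dvd_factorial).mp (hp.out.dvd_of_dvd_pow h)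
    grind [hp.out.pos]
  rcases eq_or_ne N 0 with hN | hN
  · left
    rw [hsum, hN, Nat.cast_zero, zero_div]
  · right
    rw [hsum]
    exact one_le_padicValRat_div hN hpN hpF

/-- For a prime `p ≥ 5`, the generalized harmonic number
`H_{p-1}^{(2)} = ∑_{k=1}^{p-1} 1/k^2` vanishes modulo `p`:
it is zero or has `p`-adic valuation at least `1`. -/
theorem harmonic_sq_padicValRat_ge_one (p : ℕ) (hp : p.Prime) (h5 : 5 ≤ p) :
    (∑ k ∈ Finset.Icc 1 (p - 1), (1 : ℚ) / (k : ℚ) ^ 2) = 0 ∨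
      1 ≤ padicValRat p (∑ k ∈ Finset.Icc 1 (p - 1), (1 : ℚ) / (k : ℚ) ^ 2) := by
  have := Fact.mk hp
  refine sum_Icc_one_div_pow_eq_zero_or_one_le_padicValRat fun h ↦ ?_
  have := Nat.le_of_dvd two_pos h
  omega
end

section
/- Let p ≥ 5 be prime and let A ∈ ℚ[[X]] be the formal power series A = ∑_{n ≥ 0} X^n/(n+1)! (so that exp(X) - 1 = X·A, and A is a unit in ℚ[[X]] since its constant term is 1). Then the binomial coefficient binomial(2p-1, p-1) equals the coefficient of X^{p-1} in the formal power series exp(2pX) · A^{-p}, where exp(2pX) = ∑_{n ≥ 0} (2p)^n X^n / n! and A^{-p} denotes the p-th power of the inverse of the unit A. -/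
/-!
Write `A = (exp X - 1) / X`, so that `1 + X A = exp X` and `(X A)' = exp X`. Then
`exp (2pX) = (1 + X A) ^ (2p - 1) · (X A)'`, and after the binomial expansion of `(1 + X A) ^ (2p - 1)`
the claim reduces to the residue identity `[X^m] (X A)' · A^{-(m+1)} = δ_{m,0}`, valid for any
series `A` with nonzero constant term. For `m ≥ 1` this holds because
`(X A)' A^{-(m+1)} = A^{-m} - X (A^{-m})' / m`, and the `X^m`-coefficient of `X f' / m` is that of `f`.
-/

open PowerSeries

namespace PowerSeries

variable {K : Type*} [Field K]

theorem derivative_inv_pow (A : K⟦X⟧) (m : ℕ) :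
    d⁄dX K (A⁻¹ ^ m) = -(m : K⟦X⟧) * (A⁻¹ ^ (m + 1) * d⁄dX K A) := by
  rw [derivative_pow, derivative_inv']
  rcases m with _ | m
  · simp
  · simp only [Nat.add_sub_cancel]
    ring

variable [CharZero K]

theorem coeff_derivative_X_mul_mul_inv_pow (A : K⟦X⟧) (hA : constantCoeff A ≠ 0) (m : ℕ) :
    coeff m (d⁄dX K (X * A) * A⁻¹ ^ (m + 1)) = if m = 0 then 1 else 0 := by
  have hsplit : d⁄dX K (X * A) * A⁻¹ ^ (m + 1) = A⁻¹ ^ m + X * (A⁻¹ ^ (m + 1) * d⁄dX K A) := by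
    rw [Derivation.leibniz, derivative_X]
    linear_combination A⁻¹ ^ m * PowerSeries.mul_inv_cancel A hA
  rw [hsplit]
  rcases m with _ | m
  · simp
  · have h := congrArg (coeff m) (derivative_inv_pow A (m + 1))
    rw [coeff_derivative, neg_mul, map_neg, ← map_natCast (C (R := K)), coeff_C_mul] at h
    rw [map_add, coeff_succ_X_mul, if_neg m.succ_ne_zero]
    apply mul_left_cancel₀ (Nat.cast_add_one_ne_zero (R := K) m)
    push_cast at h ⊢
    linear_combination h

theorem coeff_X_pow_mul_pow_mul_derivative_mul_inv_pow (A : K⟦X⟧) (hA : constantCoeff A ≠ 0)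
    (k n : ℕ) :
    coeff n (X ^ k * A ^ k * d⁄dX K (X * A) * A⁻¹ ^ (n + 1)) = if k = n then 1 else 0 := by
  rw [mul_assoc, mul_assoc, coeff_X_pow_mul']
  rcases le_or_gt k n with hkn | hnk
  · obtain ⟨j, rfl⟩ := Nat.exists_eq_add_of_le hkn
    have hcancel : A ^ k * A⁻¹ ^ (k + j + 1) = A⁻¹ ^ (j + 1) := by
      rw [add_assoc, pow_add, ← mul_assoc, ← mul_pow, PowerSeries.mul_inv_cancel A hA, one_pow,
        one_mul]
    rw [if_pos hkn, ← mul_assoc, mul_comm (A ^ k), mul_assoc, hcancel, Nat.add_sub_cancel_left,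
      coeff_derivative_X_mul_mul_inv_pow A hA]
    simp
  · rw [if_neg hnk.not_ge, if_neg hnk.ne']

theorem coeff_one_add_X_mul_pow_mul_derivative_mul_inv_pow (A : K⟦X⟧)
    (hA : constantCoeff A ≠ 0) (N n : ℕ) :
    coeff n ((1 + X * A) ^ N * d⁄dX K (X * A) * A⁻¹ ^ (n + 1)) = (N.choose n : K) := by
  rw [add_comm, add_pow, Finset.sum_mul, Finset.sum_mul, map_sum]
  have hterm : ∀ k, (X * A) ^ k * 1 ^ (N - k) * (N.choose k : K⟦X⟧) * d⁄dX K (X * A) *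
      A⁻¹ ^ (n + 1) = C (N.choose k : K) * (X ^ k * A ^ k * d⁄dX K (X * A) * A⁻¹ ^ (n + 1)) := by
    intro k
    rw [one_pow, mul_one, map_natCast]
    ring
  simp only [hterm, coeff_C_mul, coeff_X_pow_mul_pow_mul_derivative_mul_inv_pow A hA, mul_ite,
    mul_one, mul_zero, Finset.sum_ite_eq', Finset.mem_range]
  split_ifs with hn
  · rfl
  · rw [Nat.choose_eq_zero_of_lt (by omega), Nat.cast_zero]

end PowerSeries

noncomputable def expSubOneDivX : ℚ⟦X⟧ :=
  PowerSeries.mk fun n => (1 : ℚ) / (Nat.factorial (n + 1) : ℚ)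

theorem constantCoeff_expSubOneDivX : constantCoeff expSubOneDivX = 1 := by
  simp [expSubOneDivX]

theorem X_mul_expSubOneDivX : X * expSubOneDivX = exp ℚ - 1 := by
  ext (_ | n)
  · simp
  · simp [expSubOneDivX, coeff_exp]

theorem one_add_X_mul_expSubOneDivX : 1 + X * expSubOneDivX = exp ℚ := by
  rw [X_mul_expSubOneDivX, add_sub_cancel]

theorem derivative_X_mul_expSubOneDivX : d⁄dX ℚ (X * expSubOneDivX) = exp ℚ := by
  rw [X_mul_expSubOneDivX, map_sub, derivative_exp, Derivation.map_one_eq_zero, sub_zero]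

theorem mk_pow_div_factorial_eq_rescale_exp (a : ℚ) :
    (PowerSeries.mk fun n => a ^ n / (Nat.factorial n : ℚ)) = rescale a (exp ℚ) := by
  ext n
  simp [coeff_exp, div_eq_mul_inv]

theorem choose_eq_coeff_exp_mul_inv_pow_general (p : ℕ) :
    ((Nat.choose (2 * p - 1) (p - 1) : ℚ)) =
      PowerSeries.coeff (p - 1)
        ((PowerSeries.mk fun n => ((2 * p : ℚ)) ^ n / (Nat.factorial n : ℚ)) *
          ((PowerSeries.mk fun n => (1 : ℚ) / (Nat.factorial (n + 1) : ℚ))⁻¹) ^ p) := by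
  rcases p with _ | n
  · simp
  have hA : constantCoeff expSubOneDivX ≠ 0 := by
    rw [constantCoeff_expSubOneDivX]
    exact one_ne_zero
  have hexp : (PowerSeries.mk fun k => (2 * ((n + 1 : ℕ) : ℚ)) ^ k / (Nat.factorial k : ℚ)) =
      (1 + X * expSubOneDivX) ^ (2 * n + 1) * d⁄dX ℚ (X * expSubOneDivX) := by
    rw [one_add_X_mul_expSubOneDivX, derivative_X_mul_expSubOneDivX, ← pow_succ,
      exp_pow_eq_rescale_exp, mk_pow_div_factorial_eq_rescale_exp]
    push_cast
    ring_nf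
  rw [hexp, show 2 * (n + 1) - 1 = 2 * n + 1 by omega, Nat.add_sub_cancel]
  exact (coeff_one_add_X_mul_pow_mul_derivative_mul_inv_pow expSubOneDivX hA (2 * n + 1) n).symm

/-- For a prime `p ≥ 5`, `binomial(2p-1, p-1)` is the coefficient of `X^{p-1}` in
`exp(2pX) · A⁻ᵖ`, where `A = ∑_{n≥0} Xⁿ/(n+1)!` (a unit of `ℚ[[X]]`, and `A⁻¹`
is its inverse). -/
theorem choose_eq_coeff_exp_mul_inv_pow (p : ℕ) (hp : p.Prime) (h5 : 5 ≤ p) :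
    ((Nat.choose (2 * p - 1) (p - 1) : ℚ)) =
      PowerSeries.coeff (p - 1)
        ((PowerSeries.mk fun n => ((2 * p : ℚ)) ^ n / (Nat.factorial n : ℚ)) *
          ((PowerSeries.mk fun n => (1 : ℚ) / (Nat.factorial (n + 1) : ℚ))⁻¹) ^ p) :=
  choose_eq_coeff_exp_mul_inv_pow_general p
end

section
/- For any prime p ≥ 5, the rational number D = binomial(2p-1, p-1) − 1 − p·H_{p-1} − p^2·∑_{1 ≤ i < j ≤ p-1} 1/(i·j) satisfies: either D = 0 or padicValRat p (D) ≥ 3. (This is the expansion of binomial(2p-1, p-1) = ∏_{k=1}^{p-1}(1 + p/k) to second order in p, with remainder divisible by p^3.) -/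
/-! Since `C(2p-1, p-1) = ∏_{k<p} (1 + p/k)`, expanding the product over subsets `t` of
`{1, …, p-1}` gives `1 + p·H_{p-1} + p²·∑_{i<j} 1/(ij)` from the subsets with at most two elements, and the
remainder is the sum of the terms `p^#t / ∏_{k∈t} k` with `#t ≥ 3`. No `k < p` is divisible by `p`,
so each such term has valuation exactly `#t ≥ 3`, and a lower bound on valuations survives sums. -/

open Finset

theorem padicValRat.sum_eq_zero_or_le {p : ℕ} [Fact p.Prime] {ι : Type*} {s : Finset ι}
    {f : ι → ℚ} {n : ℤ} (hf : ∀ i ∈ s, f i = 0 ∨ n ≤ padicValRat p (f i)) :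
    ∑ i ∈ s, f i = 0 ∨ n ≤ padicValRat p (∑ i ∈ s, f i) := by
  induction s using Finset.cons_induction with
  | empty => simp
  | cons a s ha ih =>
    rw [sum_cons]
    obtain ⟨hfa, hfs⟩ := (forall_mem_cons ha _).1 hf
    rcases hfa with h0 | hva
    · simpa [h0] using ih hfs
    rcases ih hfs with h0 | hvs
    · simpa [h0] using Or.inr hva
    by_cases hsum : f a + ∑ i ∈ s, f i = 0
    · exact Or.inl hsum
    · exact Or.inr ((le_min hva hvs).trans (padicValRat.min_le_padicValRat_add hsum))

theorem padicValRat_prod_self_div_natCast {p : ℕ} [hp : Fact p.Prime] {t : Finset ℕ}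
    (ht : ∀ k ∈ t, ¬ p ∣ k) : padicValRat p (∏ k ∈ t, (p : ℚ) / k) = #t := by
  have hndvd : ¬ p ∣ ∏ k ∈ t, k := fun h ↦ by
    obtain ⟨k, hk, hpk⟩ := (Prime.dvd_finsetProd_iff hp.out.prime _).1 h
    exact ht k hk hpk
  have hprod : (∏ k ∈ t, k : ℕ) ≠ 0 := fun h ↦ hndvd (h ▸ dvd_zero p)
  have hp0 : (p : ℚ) ≠ 0 := Nat.cast_ne_zero.2 hp.out.ne_zero
  rw [prod_div_distrib, prod_const, ← Nat.cast_prod,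
    padicValRat.div (pow_ne_zero _ hp0) (Nat.cast_ne_zero.2 hprod), padicValRat.pow,
    padicValRat.self hp.out.one_lt, padicValRat.of_nat, padicValNat.eq_zero_of_not_dvd hndvd]
  simp

theorem Nat.cast_add_choose_eq_prod_one_add_div {K : Type*} [Field K] [CharZero K] (n m : ℕ) :
    ((n + m).choose m : K) = ∏ k ∈ Icc 1 m, (1 + (n : K) / k) := by
  induction m with
  | zero => simp
  | succ m ih =>
    have hstep := Nat.add_one_mul_choose_eq (n + m) m
    rw [prod_Icc_succ_top (by omega), ← ih, ← add_assoc]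
    have hm : (m : K) + 1 ≠ 0 := Nat.cast_add_one_ne_zero m
    field_simp
    norm_cast
    rw [← hstep]
    ring

theorem Finset.sum_powersetCard_two {α β : Type*} [LinearOrder α] [AddCommMonoid β]
    (s : Finset α) (f : Finset α → β) :
    ∑ t ∈ s.powersetCard 2, f t = ∑ j ∈ s, ∑ i ∈ s with i < j, f {i, j} := by
  rw [sum_sigma']
  refine (sum_nbij (fun x : (_ : α) × α ↦ ({x.2, x.1} : Finset α)) ?_ ?_ ?_ fun _ _ ↦ rfl).symm
  · rintro ⟨j, i⟩ hx
    simp only [mem_sigma, mem_filter] at hx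
    simp [mem_powersetCard, insert_subset_iff, hx, card_pair hx.2.2.ne]
  · rintro ⟨j, i⟩ hx ⟨j', i'⟩ hx' h
    simp only [coe_sigma, Set.mem_sigma_iff, coe_filter, Set.mem_ofPred_eq] at hx hx' h
    have hi : i ∈ ({i', j'} : Finset α) := h ▸ mem_insert_self i {j}
    have hj : j ∈ ({i', j'} : Finset α) := h ▸ mem_insert_of_mem (mem_singleton_self j)
    have hi' : i' ∈ ({i, j} : Finset α) := h.symm ▸ mem_insert_self i' {j'}
    simp only [mem_insert, mem_singleton] at hi hj hi'
    grind
  · intro t ht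
    obtain ⟨hts, htc⟩ := mem_powersetCard.1 ht
    obtain ⟨a, b, hab, rfl⟩ := card_eq_two.1 htc
    rw [insert_subset_iff, singleton_subset_iff] at hts
    rcases hab.lt_or_gt with h | h
    · exact ⟨⟨b, a⟩, by simp [hts, h], rfl⟩
    · exact ⟨⟨a, b⟩, by simp [hts, h], pair_comm _ _⟩

theorem Finset.prod_one_add_eq_second_order_add {α R : Type*} [LinearOrder α] [CommSemiring R]
    (s : Finset α) (f : α → R) :
    ∏ i ∈ s, (1 + f i) = 1 + ∑ i ∈ s, f i + ∑ j ∈ s, ∑ i ∈ s with i < j, f i * f j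
      + ∑ t ∈ s.powerset with 3 ≤ #t, ∏ i ∈ t, f i := by
  have hlow : ∑ t ∈ s.powerset with #t < 3, ∏ i ∈ t, f i
      = ∑ j ∈ range 3, ∑ t ∈ s.powersetCard j, ∏ i ∈ t, f i := by
    rw [← sum_fiberwise_of_maps_to (g := card) (t := range 3) (by simp)]
    refine sum_congr rfl fun j hj ↦ sum_congr ?_ fun _ _ ↦ rfl
    ext t
    simp only [mem_filter, mem_powerset, mem_powersetCard, mem_range] at hj ⊢
    grind
  rw [prod_one_add, ← sum_filter_add_sum_filter_not _ (fun t ↦ #t < 3), hlow]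
  simp only [not_lt, sum_range_succ, range_zero, sum_empty, zero_add, powersetCard_zero,
    sum_singleton, prod_empty, powersetCard_one, sum_map, Function.Embedding.coeFn_mk,
    prod_singleton, sum_powersetCard_two]
  congr 2
  exact sum_congr rfl fun j _ ↦ sum_congr rfl fun i hi ↦ prod_pair (mem_filter.1 hi).2.ne

theorem expansion_remainder_padicValRat_ge_three_general (p : ℕ) (hp : p.Prime) :
    ((Nat.choose (2 * p - 1) (p - 1) : ℚ) - 1
        - p * (∑ k ∈ Finset.Icc 1 (p - 1), (1 : ℚ) / k)
        - (p : ℚ) ^ 2 *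
            (∑ j ∈ Finset.Icc 1 (p - 1), ∑ i ∈ Finset.Ico 1 j, (1 : ℚ) / (i * j))) = 0 ∨
      3 ≤ padicValRat p
        ((Nat.choose (2 * p - 1) (p - 1) : ℚ) - 1
          - p * (∑ k ∈ Finset.Icc 1 (p - 1), (1 : ℚ) / k)
          - (p : ℚ) ^ 2 *
              (∑ j ∈ Finset.Icc 1 (p - 1), ∑ i ∈ Finset.Ico 1 j, (1 : ℚ) / (i * j))) := by
  have : Fact p.Prime := ⟨hp⟩
  have hchoose : ((2 * p - 1).choose (p - 1) : ℚ) = ∏ k ∈ Icc 1 (p - 1), (1 + (p : ℚ) / k) := by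
    rw [show 2 * p - 1 = p + (p - 1) by have := hp.one_le; omega]
    exact Nat.cast_add_choose_eq_prod_one_add_div p (p - 1)
  have hlinear : (p : ℚ) * ∑ k ∈ Icc 1 (p - 1), (1 : ℚ) / k = ∑ k ∈ Icc 1 (p - 1), (p : ℚ) / k := by
    simp only [mul_sum, mul_one_div]
  have hquadratic : (p : ℚ) ^ 2 * ∑ j ∈ Icc 1 (p - 1), ∑ i ∈ Ico 1 j, (1 : ℚ) / (i * j)
      = ∑ j ∈ Icc 1 (p - 1), ∑ i ∈ Icc 1 (p - 1) with i < j, (p : ℚ) / i * (p / j) := by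
    rw [mul_sum]
    refine sum_congr rfl fun j hj ↦ ?_
    have hfilter : {i ∈ Icc 1 (p - 1) | i < j} = Ico 1 j := by
      ext i; simp only [mem_filter, mem_Icc, mem_Ico] at hj ⊢; omega
    rw [hfilter, mul_sum]
    exact sum_congr rfl fun i _ ↦ by ring
  rw [hchoose, hlinear, hquadratic, prod_one_add_eq_second_order_add,
    show ∀ a b r : ℚ, 1 + a + b + r - 1 - a - b = r from fun _ _ _ ↦ by ring]
  refine padicValRat.sum_eq_zero_or_le fun t ht ↦ Or.inr ?_
  obtain ⟨hts, hcard⟩ := mem_filter.1 ht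
  rw [padicValRat_prod_self_div_natCast fun k hk ↦ ?_]
  · exact_mod_cast hcard
  · have hk := mem_Icc.1 (mem_powerset.1 hts hk)
    exact Nat.not_dvd_of_pos_of_lt hk.1 (by omega)

/-- For a prime `p ≥ 5`, the remainder
`D = C(2p-1, p-1) - 1 - p·H_{p-1} - p²·∑_{1 ≤ i < j ≤ p-1} 1/(ij)`
is zero or has `p`-adic valuation at least `3`. -/
theorem expansion_remainder_padicValRat_ge_three (p : ℕ) (hp : p.Prime) (h5 : 5 ≤ p) :
    ((Nat.choose (2 * p - 1) (p - 1) : ℚ) - 1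
        - p * (∑ k ∈ Finset.Icc 1 (p - 1), (1 : ℚ) / k)
        - (p : ℚ) ^ 2 *
            (∑ j ∈ Finset.Icc 1 (p - 1), ∑ i ∈ Finset.Ico 1 j, (1 : ℚ) / (i * j))) = 0 ∨
      3 ≤ padicValRat p
        ((Nat.choose (2 * p - 1) (p - 1) : ℚ) - 1
          - p * (∑ k ∈ Finset.Icc 1 (p - 1), (1 : ℚ) / k)
          - (p : ℚ) ^ 2 *
              (∑ j ∈ Finset.Icc 1 (p - 1), ∑ i ∈ Finset.Ico 1 j, (1 : ℚ) / (i * j))) :=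
  expansion_remainder_padicValRat_ge_three_general p hp
end

section
/- For any prime p ≥ 5, Glaisher's refinement of Wolstenholme's theorem holds: binomial(2p-1, p-1) ≡ 1 − (2/3)·p^3·B_{p-3} (mod p^4), i.e. the rational number binomial(2p-1, p-1) − 1 + (2/3)·p^3·B_{p-3} is either 0 or has p-adic valuation padicValRat at least 4. -/
/-!
Write `C(2p-1, p-1) = ∏_{0<k<p} (1 + p/k)` and pair `k` with `p - k`: the product becomes
`∏_{0<k≤(p-1)/2} (1 + 2p²/(k(p-k)))`, which is `1 + p² ∑_{0<k<p} 1/(k(p-k))` modulo `p⁴`.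
By Fermat, `1/(k(p-k)) ≡ k^{2p-4} - 2k^{p-3} - p k^{p-4}` modulo `p²`, and Faulhaber's formula
with von Staudt–Clausen gives `∑_{k<p} k^n ≡ p B_n` modulo `p²` for even `n` and `≡ 0` modulo `p`
for odd `n`. Hence `C(2p-1, p-1) ≡ 1 + p³ (B_{2p-4} - 2 B_{p-3})` modulo `p⁴`, and Kummer's
congruence `B_{2p-4} ≡ (4/3) B_{p-3}` modulo `p`, obtained from Voronoi's congruence, finishes
the proof. All congruences are stated as bounds `‖x - y‖ ≤ p⁻ʲ` in `ℚ_[p]`.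
-/

open Finset IsUltrametricDist

section Ultrametric

variable {R : Type*} [NormedCommRing R] [IsUltrametricDist R]

lemma norm_add_le_of_both_le {x y : R} {c : ℝ} (hx : ‖x‖ ≤ c) (hy : ‖y‖ ≤ c) : ‖x + y‖ ≤ c :=
  (norm_add_le_max x y).trans (max_le hx hy)

lemma norm_sub_le_of_both_le {x y : R} {c : ℝ} (hx : ‖x‖ ≤ c) (hy : ‖y‖ ≤ c) : ‖x - y‖ ≤ c := by
  rw [sub_eq_add_neg]
  exact norm_add_le_of_both_le hx (by rwa [norm_neg])

variable [NormOneClass R] {ι : Type*}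

lemma norm_prod_one_add_sub_one_le (s : Finset ι) (f : ι → R) {ε : ℝ} (hε₀ : 0 ≤ ε)
    (hε₁ : ε ≤ 1) (h : ∀ i ∈ s, ‖f i‖ ≤ ε) : ‖∏ i ∈ s, (1 + f i) - 1‖ ≤ ε := by
  classical
  induction s using Finset.induction with
  | empty => simpa using hε₀
  | insert a s ha ih =>
    have hs := ih fun i hi ↦ h i (mem_insert_of_mem hi)
    have hprod : ‖∏ i ∈ s, (1 + f i)‖ ≤ 1 := by
      simpa using norm_add_le_of_both_le (hs.trans hε₁) norm_one.le
    rw [prod_insert ha, show (1 + f a) * ∏ i ∈ s, (1 + f i) - 1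
      = (∏ i ∈ s, (1 + f i) - 1) + f a * ∏ i ∈ s, (1 + f i) by ring]
    exact norm_add_le_of_both_le hs
      (by simpa using norm_mul_le_of_le (h a (mem_insert_self a s)) hprod)

lemma norm_prod_one_add_sub_one_sub_sum_le (s : Finset ι) (f : ι → R) {ε : ℝ} (hε₀ : 0 ≤ ε)
    (hε₁ : ε ≤ 1) (h : ∀ i ∈ s, ‖f i‖ ≤ ε) :
    ‖∏ i ∈ s, (1 + f i) - 1 - ∑ i ∈ s, f i‖ ≤ ε ^ 2 := by
  classical
  induction s using Finset.induction with
  | empty => simp [sq_nonneg]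
  | insert a s ha ih =>
    have hs := fun i hi ↦ h i (mem_insert_of_mem hi)
    rw [prod_insert ha, sum_insert ha,
      show (1 + f a) * ∏ i ∈ s, (1 + f i) - 1 - (f a + ∑ i ∈ s, f i)
        = (∏ i ∈ s, (1 + f i) - 1 - ∑ i ∈ s, f i) + f a * (∏ i ∈ s, (1 + f i) - 1) by ring]
    exact norm_add_le_of_both_le (ih hs) (sq ε ▸ norm_mul_le_of_le (h a (mem_insert_self a s))
      (norm_prod_one_add_sub_one_le s f hε₀ hε₁ hs))

lemma norm_sub_le_of_norm_mul_sub_le {K : Type*} [NormedField K] [IsUltrametricDist K]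
    {u u' x y v v' : K} {ε : ℝ} (hu : ‖u‖ = 1) (hy : ‖y‖ ≤ 1) (hx : ‖u * x - v‖ ≤ ε)
    (hy' : ‖u' * y - v'‖ ≤ ε) (huu' : ‖u - u'‖ ≤ ε) (hvv' : ‖v - v'‖ ≤ ε) : ‖x - y‖ ≤ ε := by
  have key : u * (x - y) = (u * x - v) - (u' * y - v') + (v - v') - (u - u') * y := by ring
  have hnorm := congrArg norm key
  rw [norm_mul, hu, one_mul] at hnorm
  rw [hnorm]
  exact norm_sub_le_of_both_le (norm_add_le_of_both_le (norm_sub_le_of_both_le hx hy') hvv')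
    (by simpa using norm_mul_le_of_le huu' hy)

end Ultrametric

section Arithmetic

def faulhaberTerm (m n i : ℕ) : ℚ :=
  bernoulli i * n.choose i * (m : ℚ) ^ (n + 1 - i) / (n + 1 - i : ℕ)

lemma sum_range_pow_eq_sum_faulhaberTerm (m n : ℕ) :
    ∑ k ∈ range m, (k : ℚ) ^ n = ∑ i ∈ range (n + 1), faulhaberTerm m n i := by
  rw [sum_range_pow]
  refine sum_congr rfl fun i hi ↦ ?_
  have hi : i < n + 1 := mem_range.1 hi
  have hchoose : (n.choose i : ℚ) * (n + 1) = (n + 1).choose i * (n + 1 - i : ℕ) := by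
    exact_mod_cast Nat.choose_mul_succ_eq n i
  rw [faulhaberTerm, div_eq_div_iff (by positivity) (by norm_cast; omega)]
  linear_combination (bernoulli i * (m : ℚ) ^ (n + 1 - i)) * hchoose.symm

lemma faulhaberTerm_self (m n : ℕ) : faulhaberTerm m n n = m * bernoulli n := by
  simp [faulhaberTerm, mul_comm]

lemma sum_range_pow_sub_mul_bernoulli (m n : ℕ) :
    ∑ k ∈ range m, (k : ℚ) ^ n - m * bernoulli n = ∑ i ∈ range n, faulhaberTerm m n i := by
  rw [sum_range_pow_eq_sum_faulhaberTerm, sum_range_succ, faulhaberTerm_self, add_sub_cancel_right]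

lemma add_four_le_five_pow {a : ℕ} (ha : 1 ≤ a) : a + 4 ≤ 5 ^ a := by
  have := Nat.lt_pow_self (n := a - 1) (by norm_num : 1 < 5)
  rw [show a = a - 1 + 1 by omega, pow_succ]
  omega

lemma sum_range_mul_mod_eq {M : Type*} [AddCommMonoid M] {m b : ℕ} (hb : b.Coprime m)
    (f : ℕ → M) : ∑ k ∈ range m, f (k * b % m) = ∑ k ∈ range m, f k := by
  rcases m.eq_zero_or_pos with rfl | hm
  · simp
  have hmaps : ∀ k ∈ range m, k * b % m ∈ range m := fun k _ ↦ mem_range.2 (Nat.mod_lt _ hm)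
  have hinj : Set.InjOn (fun k ↦ k * b % m) (range m) := fun k hk j hj hkj ↦
    (Nat.ModEq.cancel_right_of_coprime hb.symm hkj).eq_of_lt_of_lt (mem_range.1 hk)
      (mem_range.1 hj)
  exact sum_nbij _ hmaps hinj (surjOn_of_injOn_of_card_le _ hmaps hinj le_rfl) fun _ _ ↦ rfl

def voronoiSum (m b n : ℕ) : ℕ :=
  ∑ k ∈ range m, (k * b % m) ^ (n - 1) * (k * b / m)

/-- Voronoi's congruence: expand `(k b) ^ n = (r + m q) ^ n`, where `r = k b % m` and
`q = k b / m`, to first order in `m q`, and use that `k ↦ k b % m` permutes `range m`. -/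
theorem voronoi_congruence {m b : ℕ} (hb : b.Coprime m) (n : ℕ) :
    (m : ℤ) ^ 2 ∣ ((b : ℤ) ^ n - 1) * ∑ k ∈ range m, (k : ℤ) ^ n - n * m * voronoiSum m b n := by
  have hperm := sum_range_mul_mod_eq hb fun k ↦ (k : ℤ) ^ n
  have hdiv (k : ℕ) : ((k * b % m : ℕ) : ℤ) + m * (k * b / m : ℕ) = k * b := by
    exact_mod_cast Nat.mod_add_div (k * b) m
  have hsplit : ((b : ℤ) ^ n - 1) * ∑ k ∈ range m, (k : ℤ) ^ n - n * m * voronoiSum m b n =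
      ∑ k ∈ range m, ((((k * b % m : ℕ) : ℤ) + m * (k * b / m : ℕ)) ^ n
        - ((k * b % m : ℕ) : ℤ) ^ (n - 1) * (m * (k * b / m : ℕ)) * n
        - ((k * b % m : ℕ) : ℤ) ^ n) := by
    have hV : (n : ℤ) * m * voronoiSum m b n =
        ∑ k ∈ range m, ((k * b % m : ℕ) : ℤ) ^ (n - 1) * (m * (k * b / m : ℕ)) * n := by
      rw [voronoiSum, Nat.cast_sum, mul_sum]
      refine sum_congr rfl fun k _ ↦ ?_
      rw [Nat.cast_mul, Nat.cast_pow]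
      ring
    rw [hV, sum_sub_distrib, sum_sub_distrib, hperm]
    simp_rw [hdiv, mul_pow]
    rw [← sum_mul _ _ ((b : ℤ) ^ n)]
    ring
  rw [hsplit]
  exact dvd_sum fun k _ ↦ (pow_dvd_pow_of_dvd (dvd_mul_right _ _) 2).trans
    (sq_dvd_add_pow_sub_sub _ _ n)

lemma choose_add_eq_prod {K : Type*} [Field K] [CharZero K] (a j : ℕ) :
    ((a + j).choose j : K) = ∏ k ∈ Ico 1 (j + 1), (1 + (a : K) / k) := by
  induction j with
  | zero => simp
  | succ j ih =>
    rw [prod_Ico_succ_top (by omega), ← ih]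
    have h : ((a + j + 1 : ℕ) : K) * (a + j).choose j =
        (a + j + 1).choose (j + 1) * (j + 1 : ℕ) := by
      exact_mod_cast Nat.add_one_mul_choose_eq (a + j) j
    rw [← add_assoc]
    field_simp
    push_cast at h ⊢
    linear_combination -h

lemma prod_Ico_one_odd_eq_prod_mul_reflect {M : Type*} [CommMonoid M] (m : ℕ) (f : ℕ → M) :
    ∏ k ∈ Ico 1 (2 * m + 1), f k = ∏ k ∈ Ico 1 (m + 1), (f k * f (2 * m + 1 - k)) := by
  rw [← prod_Ico_consecutive f (by omega : 1 ≤ m + 1) (by omega : m + 1 ≤ 2 * m + 1),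
    prod_mul_distrib, prod_Ico_reflect f 1 (by omega : m + 1 ≤ 2 * m + 1 + 1)]
  congr 3
  omega

lemma sum_Ico_one_odd_eq_sum_add_reflect {M : Type*} [AddCommMonoid M] (m : ℕ) (f : ℕ → M) :
    ∑ k ∈ Ico 1 (2 * m + 1), f k = ∑ k ∈ Ico 1 (m + 1), (f k + f (2 * m + 1 - k)) := by
  rw [← sum_Ico_consecutive f (by omega : 1 ≤ m + 1) (by omega : m + 1 ≤ 2 * m + 1),
    sum_add_distrib, sum_Ico_reflect f 1 (by omega : m + 1 ≤ 2 * m + 1 + 1)]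
  congr 3
  omega

end Arithmetic

section Padic

variable {p : ℕ} [hp : Fact p.Prime]

lemma norm_natCast_eq_one_of_not_dvd {k : ℕ} (hk : ¬p ∣ k) : ‖(k : ℚ_[p])‖ = 1 :=
  Padic.norm_natCast_eq_one_iff.2 (hp.out.coprime_iff_not_dvd.2 hk)

lemma norm_prime_pow (j : ℕ) : ‖(p : ℚ_[p]) ^ j‖ = (p : ℝ)⁻¹ ^ j := by
  rw [norm_pow, Padic.norm_p]

lemma norm_intCast_le_of_dvd {z : ℤ} {j : ℕ} (h : (p : ℤ) ^ j ∣ z) :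
    ‖(z : ℚ_[p])‖ ≤ (p : ℝ)⁻¹ ^ j := by
  rw [inv_pow, ← zpow_natCast, ← zpow_neg]
  exact (Padic.norm_int_le_pow_iff_dvd z j).2 h

lemma norm_natCast_sub_le_of_modEq {a b : ℕ} (h : a ≡ b [MOD p]) :
    ‖(a : ℚ_[p]) - b‖ ≤ (p : ℝ)⁻¹ := by
  have := norm_intCast_le_of_dvd (p := p) (z := (b : ℤ) - a) (j := 1) (by simpa using h.dvd)
  push_cast at this
  rwa [norm_sub_rev, pow_one] at this

lemma norm_pow_sub_one_le_of_not_dvd {k : ℕ} (hk : ¬p ∣ k) :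
    ‖(k : ℚ_[p]) ^ (p - 1) - 1‖ ≤ (p : ℝ)⁻¹ := by
  simpa using norm_natCast_sub_le_of_modEq
    (Nat.ModEq.pow_card_sub_one_eq_one hp.out (hp.out.coprime_iff_not_dvd.2 hk).symm)

lemma norm_natCast_sub_eq_one_of_not_modEq {a b : ℕ} (h : ¬a ≡ b [MOD p]) :
    ‖(a : ℚ_[p]) - b‖ = 1 := by
  have hdvd : ¬(p : ℤ) ∣ (a : ℤ) - b := fun hd ↦ h (Nat.modEq_iff_dvd.2 hd).symm
  have hlt := Padic.norm_intCast_lt_one_iff.not.2 hdvd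
  push_cast at hlt
  exact le_antisymm (norm_sub_le_of_both_le (norm_natCast_le_one _ _) (norm_natCast_le_one _ _))
    (not_lt.1 hlt)

lemma norm_natCast_prime_eq_one {q : ℕ} (hq : q.Prime) (hqp : q ≠ p) : ‖(q : ℚ_[p])‖ = 1 :=
  Padic.norm_natCast_eq_one_iff.2 ((Nat.coprime_primes hp.out hq).2 hqp.symm)

lemma norm_inv_natCast_prime_le {q : ℕ} (hq : q.Prime) : ‖(q : ℚ_[p])⁻¹‖ ≤ p := by
  rcases eq_or_ne q p with rfl | hqp
  · simp
  · rw [norm_inv, norm_natCast_prime_eq_one hq hqp, inv_one]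
    exact_mod_cast hp.out.one_le

/-- By von Staudt–Clausen, `B_{2k}` is an integer minus the sum of `1/q` over the primes `q` with
`q - 1 ∣ 2k`. -/
lemma norm_bernoulli_two_mul_le {k : ℕ} {C : ℝ} (hC : 1 ≤ C)
    (h : ∀ q : ℕ, q.Prime → q - 1 ∣ 2 * k → ‖(q : ℚ_[p])⁻¹‖ ≤ C) :
    ‖(bernoulli (2 * k) : ℚ_[p])‖ ≤ C := by
  obtain ⟨z, hz⟩ := Bernoulli.vonStaudt_clausen k
  rw [eq_sub_of_add_eq hz.symm, Rat.cast_sub, Rat.cast_intCast, Rat.cast_sum]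
  refine norm_sub_le_of_both_le ((Padic.norm_int_le_one z).trans hC) ?_
  refine norm_sum_le_of_forall_le_of_nonneg (zero_le_one.trans hC) fun q hq ↦ ?_
  obtain ⟨hq, hqk⟩ := (mem_filter.1 hq).2
  simpa using h q hq hqk

lemma norm_bernoulli_le_one_of_odd (hp₂ : p ≠ 2) {n : ℕ} (hn : Odd n) :
    ‖(bernoulli n : ℚ_[p])‖ ≤ 1 := by
  rcases eq_or_ne n 1 with rfl | hn₁
  · rw [bernoulli_one, Rat.cast_div, norm_div, Rat.cast_neg, Rat.cast_one, norm_neg, norm_one,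
      Rat.cast_ofNat, ← Nat.cast_ofNat, norm_natCast_prime_eq_one Nat.prime_two hp₂.symm, div_one]
  · simp [bernoulli_eq_zero_of_odd hn (by have := hn.pos; omega)]

lemma norm_bernoulli_le (n : ℕ) : ‖(bernoulli n : ℚ_[p])‖ ≤ p := by
  have hp₁ : (1 : ℝ) ≤ p := mod_cast hp.out.one_le
  obtain ⟨k, rfl | rfl⟩ := Nat.even_or_odd' n
  · exact norm_bernoulli_two_mul_le hp₁ fun q hq _ ↦ norm_inv_natCast_prime_le hq
  · rcases eq_or_ne k 0 with rfl | hk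
    · simpa [bernoulli_one, neg_div] using norm_inv_natCast_prime_le (p := p) Nat.prime_two
    · simp [bernoulli_eq_zero_of_odd (odd_two_mul_add_one k) (by omega)]

lemma norm_bernoulli_le_one {n : ℕ} (hn : ¬p - 1 ∣ n) : ‖(bernoulli n : ℚ_[p])‖ ≤ 1 := by
  obtain ⟨k, rfl | rfl⟩ := Nat.even_or_odd' n
  · refine norm_bernoulli_two_mul_le le_rfl fun q hq hqk ↦ ?_
    rw [norm_inv, norm_natCast_prime_eq_one hq (by rintro rfl; exact hn hqk), inv_one]
  · exact norm_bernoulli_le_one_of_odd (by rintro rfl; simp at hn) (odd_two_mul_add_one k)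

lemma inv_prime_pow_le_of_le {a b : ℕ} (h : a ≤ b) : (p : ℝ)⁻¹ ^ b ≤ (p : ℝ)⁻¹ ^ a :=
  pow_le_pow_of_le_one (by positivity) (inv_le_one_of_one_le₀ (mod_cast hp.out.one_le)) h

lemma norm_prime_pow_div_le (h5 : 5 ≤ p) (m : ℕ) :
    ‖(p : ℚ_[p]) ^ m / m‖ ≤ (p : ℝ)⁻¹ ^ min m 4 := by
  rcases Nat.eq_zero_or_pos m with rfl | hm
  · simp
  obtain ⟨a, u, hu, rfl⟩ := Nat.exists_eq_pow_mul_and_not_dvd hm.ne' p hp.out.ne_one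
  have hpa : p ^ a ≤ p ^ a * u :=
    Nat.le_mul_of_pos_right _ (Nat.pos_of_ne_zero (by rintro rfl; simp at hu))
  have hva : min (p ^ a * u) 4 ≤ p ^ a * u - a := by
    rcases Nat.eq_zero_or_pos a with rfl | ha
    · omega
    · have := add_four_le_five_pow ha
      have := Nat.pow_le_pow_left h5 a
      omega
  rw [norm_div, norm_prime_pow, Nat.cast_mul, Nat.cast_pow, norm_mul, norm_prime_pow,
    norm_natCast_eq_one_of_not_dvd hu, mul_one, div_eq_mul_inv,
    ← pow_sub₀ _ (by positivity) ((Nat.lt_pow_self hp.out.one_lt).le.trans hpa)]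
  exact inv_prime_pow_le_of_le hva

lemma norm_faulhaberTerm_le (h5 : 5 ≤ p) (n i : ℕ) :
    ‖(faulhaberTerm p n i : ℚ_[p])‖ ≤
      ‖(bernoulli i : ℚ_[p])‖ * (p : ℝ)⁻¹ ^ min (n + 1 - i) 4 := by
  rw [faulhaberTerm, mul_div_assoc]
  push_cast
  rw [norm_mul, norm_mul]
  exact mul_le_mul (mul_le_of_le_one_right (norm_nonneg _) (norm_natCast_le_one _ _))
    (norm_prime_pow_div_le h5 _) (norm_nonneg _) (norm_nonneg _)

lemma natCast_mul_inv_pow_succ (j : ℕ) : (p : ℝ) * (p : ℝ)⁻¹ ^ (j + 1) = (p : ℝ)⁻¹ ^ j := by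
  have : (p : ℝ) ≠ 0 := mod_cast hp.out.ne_zero
  rw [pow_succ, mul_left_comm, mul_inv_cancel₀ this, mul_one]

lemma sum_range_pow_sub_eq_sum_faulhaberTerm (n : ℕ) :
    ∑ k ∈ range p, (k : ℚ_[p]) ^ n - p * bernoulli n =
      ∑ i ∈ range n, (faulhaberTerm p n i : ℚ_[p]) := by
  exact_mod_cast congrArg (Rat.cast : ℚ → ℚ_[p]) (sum_range_pow_sub_mul_bernoulli p n)

lemma norm_sum_range_pow_sub_le (h5 : 5 ≤ p) (n : ℕ) :
    ‖∑ k ∈ range p, (k : ℚ_[p]) ^ n - p * bernoulli n‖ ≤ (p : ℝ)⁻¹ := by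
  rw [sum_range_pow_sub_eq_sum_faulhaberTerm]
  refine norm_sum_le_of_forall_le_of_nonneg (by positivity) fun i hi ↦ ?_
  have hi : i < n := mem_range.1 hi
  calc _ ≤ _ := norm_faulhaberTerm_le h5 n i
    _ ≤ p * (p : ℝ)⁻¹ ^ 2 :=
      mul_le_mul (norm_bernoulli_le i) (inv_prime_pow_le_of_le (by omega)) (by positivity)
        (by positivity)
    _ = (p : ℝ)⁻¹ := by simpa using natCast_mul_inv_pow_succ (p := p) 1

/-- For even `n` the bound improves to `p⁻²`, because the next-to-last Bernoulli number has odd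
index and is therefore `p`-integral. -/
lemma norm_sum_range_pow_sub_le_of_even (h5 : 5 ≤ p) {n : ℕ} (hn : Even n) :
    ‖∑ k ∈ range p, (k : ℚ_[p]) ^ n - p * bernoulli n‖ ≤ (p : ℝ)⁻¹ ^ 2 := by
  rw [sum_range_pow_sub_eq_sum_faulhaberTerm]
  refine norm_sum_le_of_forall_le_of_nonneg (by positivity) fun i hi ↦ ?_
  have hi : i < n := mem_range.1 hi
  refine (norm_faulhaberTerm_le h5 n i).trans ?_
  rcases eq_or_ne i (n - 1) with rfl | hi'
  · have hodd : Odd (n - 1) := Nat.Even.sub_odd (by omega) hn odd_one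
    calc _ ≤ 1 * (p : ℝ)⁻¹ ^ 2 := mul_le_mul (norm_bernoulli_le_one_of_odd (by omega) hodd)
          (inv_prime_pow_le_of_le (by omega)) (by positivity) zero_le_one
      _ = _ := one_mul _
  · calc _ ≤ p * (p : ℝ)⁻¹ ^ 3 := mul_le_mul (norm_bernoulli_le i)
          (inv_prime_pow_le_of_le (by omega)) (by positivity) (by positivity)
      _ = _ := natCast_mul_inv_pow_succ 2

lemma ZMod.pow_eq_pow_of_modEq (x : ZMod p) {i j : ℕ} (hi : i ≠ 0) (hj : j ≠ 0)
    (h : i ≡ j [MOD p - 1]) : x ^ i = x ^ j := by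
  rcases eq_or_ne x 0 with rfl | hx
  · rw [zero_pow hi, zero_pow hj]
  · have hx1 := ZMod.pow_card_sub_one_eq_one hx
    rw [pow_eq_pow_mod i hx1, pow_eq_pow_mod j hx1, h]

/-- A primitive root modulo `p` is such a `b`. -/
lemma exists_coprime_pow_not_modEq_one {n : ℕ} (hn : ¬p - 1 ∣ n) :
    ∃ b : ℕ, b.Coprime p ∧ ¬b ^ n ≡ 1 [MOD p] := by
  obtain ⟨g, hg⟩ := IsCyclic.exists_ofOrder_eq_natCard (α := (ZMod p)ˣ)
  rw [Nat.card_eq_fintype_card, ZMod.card_units] at hg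
  refine ⟨(g : ZMod p).val, (ZMod.isUnit_iff_coprime _ p).1 (by simp), fun hpow ↦ hn ?_⟩
  rw [← hg, orderOf_dvd_iff_pow_eq_one, Units.ext_iff]
  simpa using (ZMod.natCast_eq_natCast_iff _ _ _).2 hpow

lemma norm_pow_sub_one_mul_bernoulli_sub_le (h5 : 5 ≤ p) {b n : ℕ} (hb : b.Coprime p)
    (hn : Even n) :
    ‖((b : ℚ_[p]) ^ n - 1) * bernoulli n - n * voronoiSum p b n‖ ≤ (p : ℝ)⁻¹ := by
  have hV := norm_intCast_le_of_dvd (p := p) (voronoi_congruence hb n)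
  push_cast at hV
  have hbn : ‖(b : ℚ_[p]) ^ n‖ ≤ 1 := by
    rw [norm_pow]
    exact pow_le_one₀ (norm_nonneg _) (norm_natCast_le_one _ _)
  have hb₁ : ‖(b : ℚ_[p]) ^ n - 1‖ ≤ 1 := norm_sub_le_of_both_le hbn norm_one.le
  have hpX : ‖(p : ℚ_[p]) * (((b : ℚ_[p]) ^ n - 1) * bernoulli n - n * voronoiSum p b n)‖ ≤
      (p : ℝ)⁻¹ ^ 2 := by
    rw [show (p : ℚ_[p]) * (((b : ℚ_[p]) ^ n - 1) * bernoulli n - n * voronoiSum p b n) =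
      (((b : ℚ_[p]) ^ n - 1) * ∑ k ∈ range p, (k : ℚ_[p]) ^ n - n * p * voronoiSum p b n) -
        ((b : ℚ_[p]) ^ n - 1) * (∑ k ∈ range p, (k : ℚ_[p]) ^ n - p * bernoulli n) by ring]
    exact norm_sub_le_of_both_le hV
      (by simpa using norm_mul_le_of_le hb₁ (norm_sum_range_pow_sub_le_of_even h5 hn))
  rw [norm_mul, Padic.norm_p, sq] at hpX
  exact le_of_mul_le_mul_left hpX (by have := hp.out.pos; positivity)

/-- **Kummer's congruence**, from Voronoi's congruence for a primitive root `b` modulo `p`. -/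
theorem norm_bernoulli_div_sub_bernoulli_div_le (h5 : 5 ≤ p) {n m : ℕ} (hn : Even n)
    (hm : Even m) (hnm : n ≡ m [MOD p - 1]) (hdvd : ¬p - 1 ∣ n) (hpn : ¬p ∣ n) (hpm : ¬p ∣ m) :
    ‖(bernoulli n : ℚ_[p]) / n - bernoulli m / m‖ ≤ (p : ℝ)⁻¹ := by
  obtain ⟨b, hb, hbn⟩ := exists_coprime_pow_not_modEq_one hdvd
  have hn₀ : n ≠ 0 := by rintro rfl; simp at hpn
  have hm₀ : m ≠ 0 := by rintro rfl; simp at hpm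
  have hlin (k : ℕ) (hk : ¬p ∣ k) (hke : Even k) :
      ‖((b : ℚ_[p]) ^ k - 1) * (bernoulli k / k) - voronoiSum p b k‖ ≤ (p : ℝ)⁻¹ := by
    have hk₀ : (k : ℚ_[p]) ≠ 0 := Nat.cast_ne_zero.2 (by rintro rfl; simp at hk)
    rw [show ((b : ℚ_[p]) ^ k - 1) * (bernoulli k / k) - voronoiSum p b k =
      (((b : ℚ_[p]) ^ k - 1) * bernoulli k - k * voronoiSum p b k) / k by field_simp,
      norm_div, norm_natCast_eq_one_of_not_dvd hk, div_one]
    exact norm_pow_sub_one_mul_bernoulli_sub_le h5 hb hke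
  have hu : ‖(b : ℚ_[p]) ^ n - 1‖ = 1 := by
    simpa using norm_natCast_sub_eq_one_of_not_modEq hbn
  have hpow {i j : ℕ} (hi : i ≠ 0) (hj : j ≠ 0) (h : i ≡ j [MOD p - 1]) (x : ℕ) :
      x ^ i ≡ x ^ j [MOD p] := by
    rw [← ZMod.natCast_eq_natCast_iff]
    push_cast
    exact ZMod.pow_eq_pow_of_modEq _ hi hj h
  have huu' : ‖((b : ℚ_[p]) ^ n - 1) - ((b : ℚ_[p]) ^ m - 1)‖ ≤ (p : ℝ)⁻¹ := by
    simpa using norm_natCast_sub_le_of_modEq (hpow hn₀ hm₀ hnm b)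
  have hvv' : ‖(voronoiSum p b n : ℚ_[p]) - voronoiSum p b m‖ ≤ (p : ℝ)⁻¹ := by
    refine norm_natCast_sub_le_of_modEq ?_
    rw [voronoiSum, voronoiSum, ← ZMod.natCast_eq_natCast_iff]
    push_cast
    have h₁ : n - 1 ≡ m - 1 [MOD p - 1] :=
      Nat.ModEq.add_right_cancel' 1
        (by rwa [Nat.sub_add_cancel (by omega), Nat.sub_add_cancel (by omega)])
    obtain ⟨n', rfl⟩ := hn
    obtain ⟨m', rfl⟩ := hm
    exact sum_congr rfl fun k _ ↦ by rw [ZMod.pow_eq_pow_of_modEq _ (by omega) (by omega) h₁]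
  have hy : ‖(bernoulli m : ℚ_[p]) / m‖ ≤ 1 := by
    rw [norm_div, norm_natCast_eq_one_of_not_dvd hpm, div_one]
    exact norm_bernoulli_le_one ((hnm.dvd_iff dvd_rfl).not.1 hdvd)
  exact norm_sub_le_of_norm_mul_sub_le hu hy (hlin n hpn hn) (hlin m hpm hm) huu' hvv'

lemma norm_choose_sub_one_sub_le (hp₂ : p ≠ 2) :
    ‖((2 * p - 1).choose (p - 1) : ℚ_[p]) - 1 -
      p ^ 2 * ∑ k ∈ Ico 1 p, ((k : ℚ_[p]) * (p - k : ℕ))⁻¹‖ ≤ (p : ℝ)⁻¹ ^ 4 := by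
  obtain ⟨m, hm⟩ : Odd p := hp.out.odd_of_ne_two hp₂
  set g : ℕ → ℚ_[p] := fun k ↦ ((k : ℚ_[p]) * (p - k : ℕ))⁻¹ with hg
  have hprod : ((2 * p - 1).choose (p - 1) : ℚ_[p]) =
      ∏ k ∈ Ico 1 (m + 1), (1 + 2 * p ^ 2 * g k) := by
    have hpair := prod_Ico_one_odd_eq_prod_mul_reflect m fun k ↦ 1 + (p : ℚ_[p]) / k
    rw [← hm] at hpair
    rw [show 2 * p - 1 = p + (p - 1) by omega, choose_add_eq_prod,
      Nat.sub_add_cancel hp.out.one_le, hpair]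
    refine prod_congr rfl fun k hk ↦ ?_
    have hk' := mem_Ico.1 hk
    have hk₀ : (k : ℚ_[p]) ≠ 0 := Nat.cast_ne_zero.2 (by omega)
    have hpk₀ : ((p - k : ℕ) : ℚ_[p]) ≠ 0 := Nat.cast_ne_zero.2 (by omega)
    have hsum : (k : ℚ_[p]) + (p - k : ℕ) = p := by
      rw [← Nat.cast_add, Nat.add_sub_cancel' (by omega)]
    simp only [hg]
    field_simp
    linear_combination (p : ℚ_[p]) * hsum
  have hsum : ∑ k ∈ Ico 1 (m + 1), 2 * (p : ℚ_[p]) ^ 2 * g k = p ^ 2 * ∑ k ∈ Ico 1 p, g k := by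
    have hpair := sum_Ico_one_odd_eq_sum_add_reflect m g
    rw [← hm] at hpair
    rw [hpair, mul_sum]
    refine sum_congr rfl fun k hk ↦ ?_
    have hsymm : g (p - k) = g k := by
      simp only [hg, Nat.sub_sub_self (by have := mem_Ico.1 hk; omega : k ≤ p), mul_comm]
    rw [hsymm]
    ring
  have hsmall : ∀ k ∈ Ico 1 (m + 1), ‖2 * (p : ℚ_[p]) ^ 2 * g k‖ ≤ (p : ℝ)⁻¹ ^ 2 := by
    intro k hk
    have hk' := mem_Ico.1 hk
    rw [norm_mul, norm_mul, norm_prime_pow, hg, norm_inv, norm_mul,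
      norm_natCast_eq_one_of_not_dvd (Nat.not_dvd_of_pos_of_lt (by omega) (by omega)),
      norm_natCast_eq_one_of_not_dvd (Nat.not_dvd_of_pos_of_lt (by omega) (by omega))]
    simpa using mul_le_of_le_one_left (by positivity) (norm_natCast_le_one ℚ_[p] 2)
  rw [hprod, ← hsum]
  simpa [← pow_mul] using norm_prod_one_add_sub_one_sub_sum_le _ _ (by positivity)
    (pow_le_one₀ (by positivity) (inv_le_one_of_one_le₀ (mod_cast hp.out.one_le))) hsmall

/-- With `t = k ^ (p - 1) - 1 ≡ 0 (mod p)`, the error is `p²/(k³(p-k)) - t²/k² + p t/k³`. -/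
lemma norm_inv_mul_sub_le (h5 : 5 ≤ p) {k : ℕ} (hk : k ∈ Ico 1 p) :
    ‖((k : ℚ_[p]) * (p - k : ℕ))⁻¹ -
      ((k : ℚ_[p]) ^ (2 * p - 4) - 2 * k ^ (p - 3) - p * k ^ (p - 4))‖ ≤ (p : ℝ)⁻¹ ^ 2 := by
  have hk' := mem_Ico.1 hk
  have hkp : ¬p ∣ k := Nat.not_dvd_of_pos_of_lt (by omega) (by omega)
  have hx : ‖(k : ℚ_[p])‖ = 1 := norm_natCast_eq_one_of_not_dvd hkp
  have hq : ‖((p - k : ℕ) : ℚ_[p])‖ = 1 :=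
    norm_natCast_eq_one_of_not_dvd (Nat.not_dvd_of_pos_of_lt (by omega) (by omega))
  have ht := norm_pow_sub_one_le_of_not_dvd hkp
  have hsum : (k : ℚ_[p]) + (p - k : ℕ) = p := by
    rw [← Nat.cast_add, Nat.add_sub_cancel' (by omega)]
  have hx₀ : (k : ℚ_[p]) ≠ 0 := norm_ne_zero_iff.1 (by simp [hx])
  have hq₀ : ((p - k : ℕ) : ℚ_[p]) ≠ 0 := norm_ne_zero_iff.1 (by simp [hq])
  set e := p - 4
  rw [show 2 * p - 4 = 2 * e + 4 by omega, show p - 3 = e + 1 by omega]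
  rw [show p - 1 = e + 3 by omega] at ht
  set x : ℚ_[p] := (k : ℚ_[p])
  set q : ℚ_[p] := ((p - k : ℕ) : ℚ_[p])
  have key : (x * q)⁻¹ - (x ^ (2 * e + 4) - 2 * x ^ (e + 1) - p * x ^ e) =
      p ^ 2 * (x ^ 3 * q)⁻¹ - (x ^ (e + 3) - 1) ^ 2 * (x ^ 2)⁻¹ +
        p * (x ^ (e + 3) - 1) * (x ^ 3)⁻¹ := by
    field_simp
    linear_combination (x + p) * hsum
  have hinv (j : ℕ) : ‖(x ^ j)⁻¹‖ = 1 := by rw [norm_inv, norm_pow, hx, one_pow, inv_one]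
  rw [key]
  refine norm_add_le_of_both_le (norm_sub_le_of_both_le ?_ ?_) ?_
  · rw [norm_mul, norm_prime_pow, norm_inv, norm_mul, norm_pow, hx, hq]
    simp
  · rw [norm_mul, hinv, mul_one, norm_pow]
    exact pow_le_pow_left₀ (norm_nonneg _) ht 2
  · rw [norm_mul, hinv, mul_one, norm_mul, Padic.norm_p, sq]
    exact mul_le_mul_of_nonneg_left ht (by positivity)

lemma norm_sum_inv_mul_sub_le (h5 : 5 ≤ p) :
    ‖∑ k ∈ Ico 1 p, ((k : ℚ_[p]) * (p - k : ℕ))⁻¹ -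
      (∑ k ∈ range p, (k : ℚ_[p]) ^ (2 * p - 4) - 2 * ∑ k ∈ range p, (k : ℚ_[p]) ^ (p - 3) -
        p * ∑ k ∈ range p, (k : ℚ_[p]) ^ (p - 4))‖ ≤ (p : ℝ)⁻¹ ^ 2 := by
  have hS {n : ℕ} (hn : n ≠ 0) :
      ∑ k ∈ range p, (k : ℚ_[p]) ^ n = ∑ k ∈ Ico 1 p, (k : ℚ_[p]) ^ n := by
    rw [range_eq_Ico, sum_eq_sum_Ico_succ_bot hp.out.pos]
    simp [hn]
  rw [hS (by omega), hS (by omega), hS (by omega), mul_sum, mul_sum, ← sum_sub_distrib,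
    ← sum_sub_distrib, ← sum_sub_distrib]
  exact norm_sum_le_of_forall_le_of_nonneg (by positivity) fun k hk ↦ norm_inv_mul_sub_le h5 hk

lemma norm_sum_range_pow_le_of_odd (h5 : 5 ≤ p) {n : ℕ} (hn : Odd n) :
    ‖∑ k ∈ range p, (k : ℚ_[p]) ^ n‖ ≤ (p : ℝ)⁻¹ := by
  rw [← sub_add_cancel (∑ k ∈ range p, (k : ℚ_[p]) ^ n) (p * bernoulli n)]
  refine norm_add_le_of_both_le (norm_sum_range_pow_sub_le h5 n) ?_
  rw [norm_mul, Padic.norm_p]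
  exact mul_le_of_le_one_right (by positivity) (norm_bernoulli_le_one_of_odd (by omega) hn)

/-- Kummer's congruence for `2p - 4 ≡ p - 3 (mod p - 1)`, with `2p - 4 ≡ -4` and `p - 3 ≡ -3`
modulo `p`. -/
lemma norm_bernoulli_sub_four_div_three_mul_le (h5 : 5 ≤ p) :
    ‖(bernoulli (2 * p - 4) : ℚ_[p]) - 4 / 3 * bernoulli (p - 3)‖ ≤ (p : ℝ)⁻¹ := by
  obtain ⟨r, hr⟩ : Odd p := hp.out.odd_of_ne_two (by omega)
  have hnm : 2 * p - 4 ≡ p - 3 [MOD p - 1] := by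
    rw [show 2 * p - 4 = p - 3 + (p - 1) by omega]
    exact Nat.add_modEq_right
  have hdvd : ¬p - 1 ∣ 2 * p - 4 := by
    rw [show 2 * p - 4 = p - 3 + (p - 1) by omega, Nat.dvd_add_self_right]
    exact Nat.not_dvd_of_pos_of_lt (by omega) (by omega)
  have hpn : ¬p ∣ 2 * p - 4 := by
    rw [show 2 * p - 4 = p - 4 + p by omega, Nat.dvd_add_self_right]
    exact Nat.not_dvd_of_pos_of_lt (by omega) (by omega)
  have hpm : ¬p ∣ p - 3 := Nat.not_dvd_of_pos_of_lt (by omega) (by omega)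
  have hkummer := norm_bernoulli_div_sub_bernoulli_div_le h5 ⟨p - 2, by omega⟩ ⟨r - 1, by omega⟩
    hnm hdvd hpn hpm
  set x : ℚ_[p] := bernoulli (2 * p - 4) / (2 * p - 4 : ℕ) with hx
  set y : ℚ_[p] := bernoulli (p - 3) / (p - 3 : ℕ) with hy
  have hx₁ : ‖x‖ ≤ 1 := by
    rw [hx, norm_div, norm_natCast_eq_one_of_not_dvd hpn, div_one]
    exact norm_bernoulli_le_one hdvd
  have hy₁ : ‖y‖ ≤ 1 := by
    rw [hy, norm_div, norm_natCast_eq_one_of_not_dvd hpm, div_one]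
    exact norm_bernoulli_le_one ((hnm.dvd_iff dvd_rfl).not.1 hdvd)
  have hBx : (bernoulli (2 * p - 4) : ℚ_[p]) = (2 * p - 4) * x := by
    have : ((2 * p - 4 : ℕ) : ℚ_[p]) = 2 * p - 4 := by
      push_cast [Nat.cast_sub (by omega : 4 ≤ 2 * p)]
      ring
    rw [hx, ← this, mul_div_cancel₀ _ (Nat.cast_ne_zero.2 (by omega))]
  have hBy : (bernoulli (p - 3) : ℚ_[p]) = (p - 3) * y := by
    have : ((p - 3 : ℕ) : ℚ_[p]) = p - 3 := by
      push_cast [Nat.cast_sub (by omega : 3 ≤ p)]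
      ring
    rw [hy, ← this, mul_div_cancel₀ _ (Nat.cast_ne_zero.2 (by omega))]
  have h3 : ‖(3 : ℚ_[p])‖ = 1 := by
    rw [← Nat.cast_ofNat,
      norm_natCast_eq_one_of_not_dvd (Nat.not_dvd_of_pos_of_lt (by omega) (by omega))]
  rw [hBx, hBy, show (2 * p - 4) * x - 4 / 3 * ((p - 3) * y) =
    3⁻¹ * ((-12 : ℚ_[p]) * (x - y) + p * (6 * x - 4 * y)) by ring,
    norm_mul, norm_inv, h3, inv_one, one_mul]
  have hnat (n : ℕ) (z : ℚ_[p]) : ‖(n : ℚ_[p]) * z‖ ≤ ‖z‖ :=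
    (norm_mul_le _ _).trans (mul_le_of_le_one_left (norm_nonneg _) (norm_natCast_le_one _ _))
  refine norm_add_le_of_both_le ?_ ?_
  · rw [show (-12 : ℚ_[p]) * (x - y) = (12 : ℕ) * (y - x) by push_cast; ring]
    exact (hnat 12 _).trans (by rw [norm_sub_rev]; exact hkummer)
  · rw [norm_mul, Padic.norm_p]
    refine mul_le_of_le_one_right (by positivity) (norm_sub_le_of_both_le ?_ ?_)
    · exact le_trans (by simpa using hnat 6 x) hx₁
    · exact le_trans (by simpa using hnat 4 y) hy₁

lemma le_padicValRat_of_norm_le {q : ℚ} (hq : q ≠ 0) {j : ℕ}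
    (h : ‖(q : ℚ_[p])‖ ≤ (p : ℝ)⁻¹ ^ j) : (j : ℤ) ≤ padicValRat p q := by
  rw [Padic.eq_padicNorm, padicNorm.eq_zpow_of_nonzero hq, inv_pow, ← zpow_natCast,
    ← zpow_neg] at h
  push_cast at h
  have := (zpow_le_zpow_iff_right₀ (mod_cast hp.out.one_lt : (1 : ℝ) < p)).1 h
  omega

theorem norm_choose_sub_one_add_bernoulli_le (h5 : 5 ≤ p) :
    ‖((2 * p - 1).choose (p - 1) : ℚ_[p]) - 1 + 2 / 3 * p ^ 3 * bernoulli (p - 3)‖ ≤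
      (p : ℝ)⁻¹ ^ 4 := by
  obtain ⟨r, hr⟩ : Odd p := hp.out.odd_of_ne_two (by omega)
  have hG := norm_choose_sub_one_sub_le (p := p) (by omega)
  have hGS := norm_sum_inv_mul_sub_le h5
  have hS₂ := norm_sum_range_pow_sub_le_of_even h5 (n := 2 * p - 4) ⟨p - 2, by omega⟩
  have hS₁ := norm_sum_range_pow_sub_le_of_even h5 (n := p - 3) ⟨r - 1, by omega⟩
  have hS₃ := norm_sum_range_pow_le_of_odd h5 (n := p - 4) ⟨r - 2, by omega⟩
  have hB := norm_bernoulli_sub_four_div_three_mul_le h5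
  have hpow {i j : ℕ} {x : ℚ_[p]} (h : ‖x‖ ≤ (p : ℝ)⁻¹ ^ j) (hij : i + j = 4) :
      ‖(p : ℚ_[p]) ^ i * x‖ ≤ (p : ℝ)⁻¹ ^ 4 := by
    rw [norm_mul, norm_prime_pow, ← hij, pow_add]
    exact mul_le_mul_of_nonneg_left h (by positivity)
  have h2 : ‖(2 : ℚ_[p]) * (∑ k ∈ range p, (k : ℚ_[p]) ^ (p - 3) - p * bernoulli (p - 3))‖ ≤
      (p : ℝ)⁻¹ ^ 2 :=
    (norm_mul_le _ _).trans (mul_le_of_le_one_left (norm_nonneg _)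
      (by simpa using norm_natCast_le_one ℚ_[p] 2) |>.trans hS₁)
  set G := ∑ k ∈ Ico 1 p, ((k : ℚ_[p]) * (p - k : ℕ))⁻¹
  set S := fun n ↦ ∑ k ∈ range p, (k : ℚ_[p]) ^ n
  rw [show ((2 * p - 1).choose (p - 1) : ℚ_[p]) - 1 + 2 / 3 * p ^ 3 * bernoulli (p - 3) =
    (((2 * p - 1).choose (p - 1) : ℚ_[p]) - 1 - p ^ 2 * G)
      + p ^ 2 * (G - (S (2 * p - 4) - 2 * S (p - 3) - p * S (p - 4)))
      + p ^ 2 * (S (2 * p - 4) - p * bernoulli (2 * p - 4))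
      - p ^ 2 * (2 * (S (p - 3) - p * bernoulli (p - 3)))
      - p ^ 3 * S (p - 4)
      + p ^ 3 * (bernoulli (2 * p - 4) - 4 / 3 * bernoulli (p - 3)) by ring]
  refine norm_add_le_of_both_le (norm_sub_le_of_both_le (norm_sub_le_of_both_le
    (norm_add_le_of_both_le (norm_add_le_of_both_le hG (hpow hGS rfl)) (hpow hS₂ rfl))
    (hpow h2 rfl)) (hpow (j := 1) (by rwa [pow_one]) rfl))
    (hpow (j := 1) (by rwa [pow_one]) rfl)

end Padic

/-- Glaisher's refinement of Wolstenholme's theorem: for a prime `p ≥ 5`,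
`C(2p-1, p-1) ≡ 1 - (2/3)·p³·B_{p-3} (mod p⁴)`, i.e. the rational number
`C(2p-1, p-1) - 1 + (2/3)·p³·B_{p-3}` is zero or has `p`-adic valuation
at least `4`. -/
theorem glaisher_refinement (p : ℕ) (hp : p.Prime) (h5 : 5 ≤ p) :
    ((Nat.choose (2 * p - 1) (p - 1) : ℚ) - 1
        + (2 / 3) * (p : ℚ) ^ 3 * bernoulli (p - 3)) = 0 ∨
      4 ≤ padicValRat p
        ((Nat.choose (2 * p - 1) (p - 1) : ℚ) - 1
          + (2 / 3) * (p : ℚ) ^ 3 * bernoulli (p - 3)) := by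
  have : Fact p.Prime := ⟨hp⟩
  refine or_iff_not_imp_left.2 fun hne ↦ le_padicValRat_of_norm_le hne ?_
  push_cast
  exact norm_choose_sub_one_add_bernoulli_le h5
end
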